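/- All eigenvalues of the linearization M are nonnegative: if M(Y) = αY for a nonzero Hermitian Y, then α ≥ 0. -/

import Mathlib

open Matrix MeasureTheory Real Filter
open scoped ComplexOrder

noncomputable section

abbrev Mat (n : ℕ) := Matrix (Fin n) (Fin n) ℂ
abbrev Vec (n : ℕ) := Matrix (Fin n) (Fin 1) ℂ

/-- the point e^{jθ} on the unit circle -/
def circPt (θ : ℝ) : ℂ := Complex.exp (θ * Complex.I)

/-- G(e^{jθ}) = (e^{jθ} I - A)⁻¹ B -/
def Gm {n : ℕ} (A : Mat n) (B : Vec n) (θ : ℝ) : Vec n :=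
  (circPt θ • (1 : Mat n) - A)⁻¹ * B

/-- the scalar G* Λ G at e^{jθ} -/
def quad {n : ℕ} (A : Mat n) (B : Vec n) (Λ : Mat n) (θ : ℝ) : ℂ :=
  ((Gm A B θ)ᴴ * Λ * Gm A B θ) 0 0

/-- normalized entrywise matrix integral over the unit circle -/
def mInt {n : ℕ} (f : ℝ → Mat n) : Mat n :=
  Matrix.of fun i j => (1 / (2 * π) : ℝ) • ∫ θ in (0:ℝ)..(2 * π), f θ i j

/-- normalized scalar (complex) integral over the unit circle -/
def sInt (f : ℝ → ℂ) : ℂ := (1 / (2 * π) : ℝ) • ∫ θ in (0:ℝ)..(2 * π), f θ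

/-- normalized scalar (real) integral over the unit circle -/
def sIntR (f : ℝ → ℝ) : ℝ := (1 / (2 * π)) * ∫ θ in (0:ℝ)..(2 * π), f θ

/-- all eigenvalues of A lie in the open unit disc -/
def IsStable {n : ℕ} (A : Mat n) : Prop := ∀ μ ∈ spectrum ℂ A, ‖μ‖ < 1

/-- (A,B) is a reachable pair: the controllability matrix has full rank -/
def Reachable {n : ℕ} (A : Mat n) (B : Vec n) : Prop :=
  (Matrix.of fun (i : Fin n) (k : Fin n) => (A ^ (k : ℕ) * B) i 0).rank = n

open scoped Classical in
/-- positive semidefinite square root (junk value 0 off the psd cone) -/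
def msqrt {n : ℕ} (M : Mat n) : Mat n :=
  if h : M.PosSemidef then (h.1.eigenvectorUnitary : Mat n) *
    diagonal ((↑) ∘ (√·) ∘ h.1.eigenvalues) * (star h.1.eigenvectorUnitary : Mat n) else 0

/-- the moment map ∫ G (Ψ/(G*ΛG)) G* -/
def moment {n : ℕ} (A : Mat n) (B : Vec n) (Ψ : ℝ → ℝ) (Λ : Mat n) : Mat n :=
  mInt (fun θ => ((Ψ θ : ℂ) / quad A B Λ θ) • (Gm A B θ * (Gm A B θ)ᴴ))

/-- the iteration map Θ(Λ) = ∫ Λ^{1/2} G (Ψ/(G*ΛG)) G* Λ^{1/2} -/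
def Theta {n : ℕ} (A : Mat n) (B : Vec n) (Ψ : ℝ → ℝ) (Λ : Mat n) : Mat n :=
  mInt (fun θ => ((Ψ θ : ℂ) / quad A B Λ θ) •
    (msqrt Λ * (Gm A B θ * (Gm A B θ)ᴴ) * msqrt Λ))

/-- the linearization M of Θ at Λ:
M(X) = X - Λ^{1/2} ∫ (GΨG*/(G*ΛG)) (G*XG/(G*ΛG)) Λ^{1/2} -/
def Mlin {n : ℕ} (A : Mat n) (B : Vec n) (Ψ : ℝ → ℝ) (Λ : Mat n) (X : Mat n) : Mat n :=
  X - msqrt Λ * mInt (fun θ =>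
    (((Ψ θ : ℂ) * (((Gm A B θ)ᴴ * X * Gm A B θ) 0 0)) / (quad A B Λ θ) ^ 2) •
      (Gm A B θ * (Gm A B θ)ᴴ)) * msqrt Λ

/-- the range of the operator Γ : Φ ↦ ∫ G Φ G* on continuous (2π-periodic) functions -/
def RangeGamma {n : ℕ} (A : Mat n) (B : Vec n) : Set (Mat n) :=
  {M | ∃ Φ : ℝ → ℝ, Continuous Φ ∧ (∀ θ, Φ (θ + 2 * π) = Φ θ) ∧
    M = mInt (fun θ => (Φ θ : ℂ) • (Gm A B θ * (Gm A B θ)ᴴ))}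

/-!
Write `Mlin = id - T` with `T X = ∫ L X L*`. The map `T` sends positive semidefinite matrices
to positive semidefinite ones, and since `Λ` is a fixed point (`∫ G (Ψ/(G*ΛG)) G* = 1`) it also
preserves the trace. A positive trace-preserving map sends Hermitian matrices to Hermitian ones,
so an eigenvalue `1 - α` with a Hermitian eigenvector is real; and it contracts the trace norm:
if `T Y = c • Y` with `c > 1`, pairing with the projection `P` onto the positive eigenspace of
`Y` gives `c tr Y⁺ = tr (P T Y) ≤ tr (T Y⁺) = tr Y⁺`, so `Y⁺ = 0`, and symmetrically `Y⁻ = 0`.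
-/

open scoped MatrixOrder

namespace Matrix

variable {ι : Type*} [Fintype ι]

lemma IsHermitian.exists_jordan_decomposition [DecidableEq ι] {Y : Matrix ι ι ℂ}
    (hY : Y.IsHermitian) :
    ∃ P Yp Ym : Matrix ι ι ℂ, P.IsHermitian ∧ IsIdempotentElem P ∧ Yp.PosSemidef ∧
      Ym.PosSemidef ∧ Y = Yp - Ym ∧ P * Y = Yp := by
  have hcont (f : ℝ → ℝ) : ContinuousOn f (spectrum ℝ Y) :=
    (finite_real_spectrum (A := Y)).continuousOn f
  refine ⟨cfc (fun t : ℝ => if 0 < t then (1 : ℝ) else 0) Y, cfc (fun t : ℝ => max t 0) Y,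
    cfc (fun t : ℝ => max (-t) 0) Y, cfc_predicate _ Y, ?_, ?_, ?_, ?_, ?_⟩
  · rw [IsIdempotentElem, ← cfc_mul _ _ Y (hcont _) (hcont _)]
    congr 1; funext t; split_ifs <;> simp
  · exact nonneg_iff_posSemidef.mp (cfc_nonneg fun t _ => le_max_right _ _)
  · exact nonneg_iff_posSemidef.mp (cfc_nonneg fun t _ => le_max_right _ _)
  · rw [← cfc_sub _ _ Y (hcont _) (hcont _)]
    conv_lhs => rw [← cfc_id' ℝ Y]
    congr 1; funext t; simp
  · conv_lhs => arg 2; rw [← cfc_id' ℝ Y]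
    rw [← cfc_mul _ _ Y (hcont _) (hcont _)]
    congr 1; funext t; split_ifs with h
    · simp [h.le]
    · simp [not_lt.mp h]

lemma trace_mul_nonneg_of_isIdempotentElem {P M : Matrix ι ι ℂ} (hP : P.IsHermitian)
    (hPP : IsIdempotentElem P) (hM : M.PosSemidef) : 0 ≤ (P * M).trace := by
  have hPMP : (P * M * P).PosSemidef := by
    simpa only [hP.eq] using hM.mul_mul_conjTranspose_same P
  calc 0 ≤ (P * M * P).trace := hPMP.trace_nonneg
    _ = (P * M).trace := by rw [trace_mul_cycle, hPP.eq]

lemma trace_mul_le_of_isIdempotentElem [DecidableEq ι] {P M : Matrix ι ι ℂ}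
    (hP : P.IsHermitian) (hPP : IsIdempotentElem P) (hM : M.PosSemidef) :
    (P * M).trace ≤ M.trace := by
  have h := trace_mul_nonneg_of_isIdempotentElem (isHermitian_one.sub hP) hPP.one_sub hM
  rwa [Matrix.sub_mul, Matrix.one_mul, trace_sub, sub_nonneg] at h

end Matrix

variable {ι : Type*} [Fintype ι]

structure IsPositiveTracePreserving (T : Matrix ι ι ℂ →+ Matrix ι ι ℂ) : Prop where
  map_posSemidef : ∀ ⦃X⦄, X.PosSemidef → (T X).PosSemidef
  trace_map : ∀ X, (T X).trace = X.trace

namespace IsPositiveTracePreserving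

variable [DecidableEq ι] {T : Matrix ι ι ℂ →+ Matrix ι ι ℂ} {Y : Matrix ι ι ℂ}

lemma isHermitian_map (hT : IsPositiveTracePreserving T) (hY : Y.IsHermitian) :
    (T Y).IsHermitian := by
  obtain ⟨-, Yp, Ym, -, -, hYp, hYm, rfl, -⟩ := hY.exists_jordan_decomposition
  rw [map_sub]
  exact (hT.map_posSemidef hYp).1.sub (hT.map_posSemidef hYm).1

lemma neg_posSemidef_of_map_eq_smul (hT : IsPositiveTracePreserving T) (hY : Y.IsHermitian)
    {c : ℝ} (hc : 1 < c) (hTY : T Y = (c : ℂ) • Y) : (-Y).PosSemidef := by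
  obtain ⟨P, Yp, Ym, hP, hPP, hYp, hYm, hYpm, hPY⟩ := hY.exists_jordan_decomposition
  have hcontract : (c : ℂ) * Yp.trace ≤ Yp.trace :=
    calc (c : ℂ) * Yp.trace = (P * T Y).trace := by
          rw [hTY, Matrix.mul_smul, trace_smul, hPY, smul_eq_mul]
      _ = (P * T Yp).trace - (P * T Ym).trace := by
          rw [hYpm, map_sub, Matrix.mul_sub, trace_sub]
      _ ≤ (P * T Yp).trace :=
          sub_le_self _ (trace_mul_nonneg_of_isIdempotentElem hP hPP (hT.map_posSemidef hYm))
      _ ≤ (T Yp).trace := trace_mul_le_of_isIdempotentElem hP hPP (hT.map_posSemidef hYp)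
      _ = Yp.trace := hT.trace_map Yp
  have hYp0 : Yp = 0 := by
    have h : ((c : ℂ) - 1) * Yp.trace ≤ (c - 1) * 0 := by linear_combination hcontract
    refine hYp.trace_eq_zero_iff.mp (le_antisymm ?_ hYp.trace_nonneg)
    exact le_of_mul_le_mul_left h (by norm_cast; linarith)
  rwa [hYpm, hYp0, zero_sub, neg_neg]

lemma eq_zero_of_map_eq_smul (hT : IsPositiveTracePreserving T) (hY : Y.IsHermitian)
    {c : ℝ} (hc : 1 < c) (hTY : T Y = (c : ℂ) • Y) : Y = 0 := by
  have hneg := hT.neg_posSemidef_of_map_eq_smul hY hc hTY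
  have hpos := hT.neg_posSemidef_of_map_eq_smul hY.neg hc (by rw [map_neg, hTY, smul_neg])
  rw [neg_neg] at hpos
  exact le_antisymm (le_iff.mpr (by simpa using hneg)) (nonneg_iff_posSemidef.mpr hpos)

theorem im_eq_zero_and_re_le_one_of_map_eq_smul (hT : IsPositiveTracePreserving T)
    (hY : Y.IsHermitian) (hY0 : Y ≠ 0) {μ : ℂ} (hTY : T Y = μ • Y) :
    μ.im = 0 ∧ μ.re ≤ 1 := by
  have hμ : star μ = μ := by
    refine smul_left_injective ℂ hY0 ?_
    have h := (hT.isHermitian_map hY).eq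
    rwa [hTY, conjTranspose_smul, hY.eq] at h
  have him : μ.im = 0 := Complex.conj_eq_iff_im.mp hμ
  refine ⟨him, not_lt.mp fun hre => hY0 (hT.eq_zero_of_map_eq_smul hY hre ?_)⟩
  rwa [← Complex.re_add_im μ, him, Complex.ofReal_zero, zero_mul, add_zero] at hTY

end IsPositiveTracePreserving

section CircleIntegral

open intervalIntegral

variable {n : ℕ}

lemma sInt_nonneg {f : ℝ → ℂ} (hf : ∀ θ, 0 ≤ f θ) : 0 ≤ sInt f := by
  have hf_re : f = fun θ => ((f θ).re : ℂ) :=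
    funext fun θ => (Complex.conj_eq_iff_re.mp (IsSelfAdjoint.of_nonneg (hf θ))).symm
  rw [sInt, hf_re, integral_ofReal, Complex.real_smul, ← Complex.ofReal_mul,
    Complex.zero_le_real]
  exact mul_nonneg (by positivity) (integral_nonneg (by positivity)
    fun θ _ => Complex.nonneg_iff.mp (hf θ) |>.1)

lemma star_sInt (f : ℝ → ℂ) : star (sInt f) = sInt fun θ => star (f θ) := by
  simp only [sInt, Complex.star_def, Complex.real_smul, map_mul, Complex.conj_ofReal,
    intervalIntegral, map_sub, integral_conj]

lemma conjTranspose_mInt (f : ℝ → Mat n) : (mInt f)ᴴ = mInt fun θ => (f θ)ᴴ :=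
  Matrix.ext fun i j => star_sInt fun θ => f θ j i

lemma mInt_add {f g : ℝ → Mat n} (hf : Continuous f) (hg : Continuous g) :
    mInt (fun θ => f θ + g θ) = mInt f + mInt g :=
  Matrix.ext fun i j => by
    simp only [mInt, Matrix.of_apply, Matrix.add_apply, ← smul_add]
    rw [integral_add ((hf.matrix_elem i j).intervalIntegrable _ _)
      ((hg.matrix_elem i j).intervalIntegrable _ _)]

lemma sum_mul_mInt (c : Fin n → Fin n → ℂ) {f : ℝ → Mat n} (hf : Continuous f) :
    ∑ i, ∑ j, c i j * mInt f i j = sInt fun θ => ∑ i, ∑ j, c i j * f θ i j := by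
  have hcont (i j : Fin n) : Continuous fun θ => c i j * f θ i j :=
    (hf.matrix_elem i j).const_mul _
  simp only [sInt, mInt, Matrix.of_apply, mul_smul_comm, ← Finset.smul_sum]
  rw [integral_finsetSum fun i _ =>
    (continuous_finsetSum _ fun j _ => hcont i j).intervalIntegrable _ _]
  refine congrArg _ (Finset.sum_congr rfl fun i _ => ?_)
  rw [integral_finsetSum fun j _ => (hcont i j).intervalIntegrable _ _]
  simp only [intervalIntegral.integral_const_mul]

end CircleIntegral

section Gamma

variable {n : ℕ} (A : Mat n) (B : Vec n)

lemma continuous_Gm (hA : IsStable A) : Continuous (Gm A B) := by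
  have hres : Continuous fun θ : ℝ => circPt θ • (1 : Mat n) - A :=
    ((Complex.continuous_exp.comp (Complex.continuous_ofReal.mul continuous_const)).smul
      continuous_const).sub continuous_const
  have hdet (θ : ℝ) : (circPt θ • (1 : Mat n) - A).det ≠ 0 := by
    intro h0
    have hspec : circPt θ ∈ spectrum ℂ A := by
      rw [spectrum.mem_iff, Algebra.algebraMap_eq_smul_one, isUnit_iff_isUnit_det, h0]
      exact not_isUnit_zero
    simpa [circPt, Complex.norm_exp] using hA _ hspec
  have hGm : Gm A B = fun θ =>
      ((circPt θ • (1 : Mat n) - A).det⁻¹ • (circPt θ • (1 : Mat n) - A).adjugate) * B :=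
    funext fun θ => by rw [Gm, Matrix.inv_def, Ring.inverse_eq_inv']
  rw [hGm]
  exact ((hres.matrix_det.inv₀ hdet).smul hres.matrix_adjugate).matrix_mul continuous_const

lemma continuous_quad (hA : IsStable A) (X : Mat n) : Continuous (quad A B X) :=
  (((continuous_Gm A B hA).matrix_conjTranspose.matrix_mul continuous_const).matrix_mul
    (continuous_Gm A B hA)).matrix_elem 0 0

lemma quad_add (X Z : Mat n) (θ : ℝ) : quad A B (X + Z) θ = quad A B X θ + quad A B Z θ := by
  simp only [quad, Matrix.mul_add, Matrix.add_mul, Matrix.add_apply]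

lemma quad_nonneg {X : Mat n} (hX : X.PosSemidef) (θ : ℝ) : 0 ≤ quad A B X θ := by
  simpa [quad, dotProduct, Matrix.mulVec, Pi.single_apply] using
    (hX.conjTranspose_mul_mul_same (Gm A B θ)).dotProduct_mulVec_nonneg (Pi.single 0 1)

lemma trace_Gm_mul_conjTranspose_mul (X : Mat n) (θ : ℝ) :
    (Gm A B θ * (Gm A B θ)ᴴ * X).trace = quad A B X θ := by
  rw [Matrix.mul_assoc, trace_mul_comm, trace_fin_one, quad]

/-- The paper's `Γ w = ∫ G w G*`. -/
def gammaOp (w : ℝ → ℂ) : Mat n := mInt fun θ => w θ • (Gm A B θ * (Gm A B θ)ᴴ)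

variable {A B}

lemma continuous_smul_Gm_mul_conjTranspose (hA : IsStable A) {w : ℝ → ℂ} (hw : Continuous w) :
    Continuous fun θ => w θ • (Gm A B θ * (Gm A B θ)ᴴ) :=
  hw.smul ((continuous_Gm A B hA).matrix_mul (continuous_Gm A B hA).matrix_conjTranspose)

lemma gammaOp_add (hA : IsStable A) {v w : ℝ → ℂ} (hv : Continuous v) (hw : Continuous w) :
    gammaOp A B (fun θ => v θ + w θ) = gammaOp A B v + gammaOp A B w := by
  simp only [gammaOp, add_smul]
  exact mInt_add (continuous_smul_Gm_mul_conjTranspose hA hv)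
    (continuous_smul_Gm_mul_conjTranspose hA hw)

lemma trace_gammaOp_mul (hA : IsStable A) {w : ℝ → ℂ} (hw : Continuous w) (C : Mat n) :
    (gammaOp A B w * C).trace = sInt fun θ => w θ * quad A B C θ := by
  have htrace (M : Mat n) : (M * C).trace = ∑ i, ∑ j, C j i * M i j := by
    simp only [trace, diag, mul_apply, mul_comm]
  rw [htrace, gammaOp, sum_mul_mInt _ (continuous_smul_Gm_mul_conjTranspose hA hw)]
  simp only [← htrace, Matrix.smul_mul, trace_smul, trace_Gm_mul_conjTranspose_mul, smul_eq_mul]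

lemma gammaOp_posSemidef (hA : IsStable A) {w : ℝ → ℂ} (hw : Continuous w)
    (hw0 : ∀ θ, 0 ≤ w θ) : (gammaOp A B w).PosSemidef := by
  have hweighted (θ : ℝ) : (w θ • (Gm A B θ * (Gm A B θ)ᴴ)).PosSemidef :=
    (posSemidef_self_mul_conjTranspose _).smul (hw0 θ)
  refine .of_dotProduct_mulVec_nonneg ?_ fun x => ?_
  · rw [IsHermitian, gammaOp, conjTranspose_mInt]
    simp only [(hweighted _).isHermitian.eq]
  · have hform (M : Mat n) :
        star x ⬝ᵥ (M *ᵥ x) = ∑ i, ∑ j, star (x i) * x j * M i j := by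
      simp only [dotProduct, mulVec, Pi.star_apply, Finset.mul_sum]
      exact Finset.sum_congr rfl fun i _ => Finset.sum_congr rfl fun j _ => by ring
    rw [hform, gammaOp, sum_mul_mInt _ (continuous_smul_Gm_mul_conjTranspose hA hw)]
    exact sInt_nonneg fun θ => hform _ ▸ (hweighted θ).dotProduct_mulVec_nonneg x

end Gamma

section Linearization

variable {n : ℕ}

lemma msqrt_eq_sqrt {Λ : Mat n} (hΛ : Λ.PosSemidef) : msqrt Λ = CFC.sqrt Λ := by
  rw [CFC.sqrt_eq_cfc, cfc_nnreal_eq_real _ Λ hΛ.nonneg, hΛ.1.cfc_eq, msqrt, dif_pos hΛ,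
    IsHermitian.cfc, Unitary.conjStarAlgAut_apply]
  simp only [Function.comp_def, Real.sqrt]
  congr

lemma isHermitian_msqrt {Λ : Mat n} (hΛ : Λ.PosSemidef) : (msqrt Λ).IsHermitian := by
  rw [msqrt_eq_sqrt hΛ]
  exact (nonneg_iff_posSemidef.mp (CFC.sqrt_nonneg Λ)).isHermitian

lemma msqrt_mul_msqrt {Λ : Mat n} (hΛ : Λ.PosSemidef) : msqrt Λ * msqrt Λ = Λ := by
  rw [msqrt_eq_sqrt hΛ, CFC.sqrt_mul_sqrt_self Λ hΛ.nonneg]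

variable (A : Mat n) (B : Vec n) (Ψ : ℝ → ℝ) (Λ : Mat n)

def linWeight (X : Mat n) (θ : ℝ) : ℂ := Ψ θ * quad A B X θ / quad A B Λ θ ^ 2

/-- `T X = ∫ L X L*` in the paper's notation. -/
def Tlin (X : Mat n) : Mat n := msqrt Λ * gammaOp A B (linWeight A B Ψ Λ X) * msqrt Λ

lemma Mlin_eq_sub_Tlin (X : Mat n) : Mlin A B Ψ Λ X = X - Tlin A B Ψ Λ X := rfl

variable {A B Ψ Λ}

lemma continuous_linWeight (hA : IsStable A) (hΨc : Continuous Ψ)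
    (hq : ∀ θ, 0 < (quad A B Λ θ).re) (X : Mat n) : Continuous (linWeight A B Ψ Λ X) :=
  ((Complex.continuous_ofReal.comp hΨc).mul (continuous_quad A B hA X)).div
    ((continuous_quad A B hA Λ).pow 2) fun θ => pow_ne_zero 2 (Complex.ne_zero_of_re_pos (hq θ))

lemma Tlin_add (hA : IsStable A) (hΨc : Continuous Ψ) (hq : ∀ θ, 0 < (quad A B Λ θ).re)
    (X Z : Mat n) : Tlin A B Ψ Λ (X + Z) = Tlin A B Ψ Λ X + Tlin A B Ψ Λ Z := by
  have hw : linWeight A B Ψ Λ (X + Z) =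
      fun θ => linWeight A B Ψ Λ X θ + linWeight A B Ψ Λ Z θ := by
    funext θ
    simp only [linWeight, quad_add]
    ring
  rw [Tlin, hw, gammaOp_add hA (continuous_linWeight hA hΨc hq X)
    (continuous_linWeight hA hΨc hq Z), Matrix.mul_add, Matrix.add_mul, Tlin, Tlin]

lemma Tlin_posSemidef (hA : IsStable A) (hΨc : Continuous Ψ) (hΨpos : ∀ θ, 0 < Ψ θ)
    (hΛ : Λ.PosSemidef) (hq : ∀ θ, 0 < (quad A B Λ θ).re) {X : Mat n} (hX : X.PosSemidef) :
    (Tlin A B Ψ Λ X).PosSemidef := by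
  have hquadΛ (θ : ℝ) : 0 < quad A B Λ θ :=
    (quad_nonneg A B hΛ θ).lt_of_ne (Complex.ne_zero_of_re_pos (hq θ)).symm
  have hw (θ : ℝ) : 0 ≤ linWeight A B Ψ Λ X θ :=
    div_nonneg (mul_nonneg (Complex.zero_le_real.mpr (hΨpos θ).le) (quad_nonneg A B hX θ))
      (pow_nonneg (hquadΛ θ).le 2)
  have h := (gammaOp_posSemidef (B := B) hA (continuous_linWeight hA hΨc hq X)
    hw).mul_mul_conjTranspose_same (msqrt Λ)
  rwa [(isHermitian_msqrt hΛ).eq] at h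

lemma trace_Tlin (hA : IsStable A) (hΨc : Continuous Ψ) (hΛ : Λ.PosSemidef)
    (hq : ∀ θ, 0 < (quad A B Λ θ).re) (hmom : moment A B Ψ Λ = 1) (X : Mat n) :
    (Tlin A B Ψ Λ X).trace = X.trace := by
  have hquadΛ (θ : ℝ) : quad A B Λ θ ≠ 0 := Complex.ne_zero_of_re_pos (hq θ)
  have hmom_cont : Continuous fun θ => (Ψ θ : ℂ) / quad A B Λ θ :=
    (Complex.continuous_ofReal.comp hΨc).div (continuous_quad A B hA Λ) hquadΛ
  calc (Tlin A B Ψ Λ X).trace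
      = (gammaOp A B (linWeight A B Ψ Λ X) * Λ).trace := by
        rw [Tlin, trace_mul_comm, ← Matrix.mul_assoc, msqrt_mul_msqrt hΛ, trace_mul_comm]
    _ = (moment A B Ψ Λ * X).trace := by
        rw [trace_gammaOp_mul hA (continuous_linWeight hA hΨc hq X), moment,
          ← gammaOp, trace_gammaOp_mul hA hmom_cont]
        congr 1
        funext θ
        simp only [linWeight]
        field_simp [hquadΛ θ]
    _ = X.trace := by rw [hmom, Matrix.one_mul]

end Linearization

theorem stmt16_general {n : ℕ} (A : Mat n) (B : Vec n) (Ψ : ℝ → ℝ) (Λ : Mat n)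
    (hA : IsStable A)
    (hΨc : Continuous Ψ) (hΨpos : ∀ θ, 0 < Ψ θ)
    (hΛ : Λ.PosDef)
    (hq : ∀ θ, 0 < (quad A B Λ θ).re)
    (hmom : moment A B Ψ Λ = 1)
    (Y : Mat n) (α : ℂ) (hY : Y.IsHermitian) (hY0 : Y ≠ 0)
    (heig : Mlin A B Ψ Λ Y = α • Y) :
    α.im = 0 ∧ 0 ≤ α.re := by
  let T : Mat n →+ Mat n := AddMonoidHom.mk' (Tlin A B Ψ Λ) (Tlin_add hA hΨc hq)
  have hT : IsPositiveTracePreserving T :=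
    ⟨fun _ => Tlin_posSemidef hA hΨc hΨpos hΛ.posSemidef hq,
      trace_Tlin hA hΨc hΛ.posSemidef hq hmom⟩
  have hTY : T Y = (1 - α) • Y := by
    rw [Mlin_eq_sub_Tlin] at heig
    rw [sub_smul, one_smul, ← heig, sub_sub_cancel]
    rfl
  obtain ⟨him, hre⟩ := hT.im_eq_zero_and_re_le_one_of_map_eq_smul hY hY0 hTY
  simp only [Complex.sub_im, Complex.one_im, Complex.sub_re, Complex.one_re] at him hre
  exact ⟨by linarith, by linarith⟩

/-- all eigenvalues of M are nonnegative. -/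
theorem stmt16 {n : ℕ} (A : Mat n) (B : Vec n) (Ψ : ℝ → ℝ) (Λ : Mat n)
    (hA : IsStable A) (hR : Reachable A B)
    (hΨc : Continuous Ψ) (hΨpos : ∀ θ, 0 < Ψ θ)
    (hΛ : Λ.PosDef)
    (hq : ∀ θ, 0 < (quad A B Λ θ).re)
    (hmom : moment A B Ψ Λ = 1)
    (Y : Mat n) (α : ℂ) (hY : Y.IsHermitian) (hY0 : Y ≠ 0)
    (heig : Mlin A B Ψ Λ Y = α • Y) :
    α.im = 0 ∧ 0 ≤ α.re :=
  stmt16_general A B Ψ Λ hA hΨc hΨpos hΛ hq hmom Y α hY hY0 heig
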